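/- Let w(x) = (x^3+5x^2−2x+2)/(x^2+4) for x ≥ 0 and w(x) = (x^3−x^2−2x+2)/(x^2+4) for x < 0, and f_K(x) = 1/(π(1−x^2)√(1−2x^2)) on (−1/√2,1/√2). Then ∫_{−1/√2}^{1/√2} w(x) f_K(x) dx = 3/5. -/

import Mathlib

open Real

noncomputable def wojcikWeightQuarter (x : ℝ) : ℝ :=
  if 0 ≤ x then (x^3 + 5 * x^2 - 2 * x + 2) / (x^2 + 4)
  else (x^3 - x^2 - 2 * x + 2) / (x^2 + 4)

/-!
The weight splits as `2 (x² + 1) / (x² + 4) + x (x² + 3|x| - 2) / (x² + 4)`; the second summand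
is odd and the density is even, so it integrates to zero. For the even part, partial fractions give
`2 (x² + 1) / ((x² + 4)(1 - x²)) = (4/5) / (1 - x²) - (6/5) / (x² + 4)`, and both terms, divided by
`√(1 - 2x²)`, are derivatives of functions `arcsin (c x / √(1 + b x²))` (with `(c, b) = (1, -1)`
and `(3/2, 1/4)`). Both arcsines equal `π/2` at `x = 1/√2`, so the integral is
`2 · (4/5 - 1/5) · (π/2) / π = 3/5`. The density is unbounded at `±1/√2`; its integrability comes
from its continuous monotone primitive.
-/

open Set MeasureTheory intervalIntegral

noncomputable def konnoDensity (x : ℝ) : ℝ := 1 / (π * (1 - x ^ 2) * √(1 - 2 * x ^ 2))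

noncomputable def arcsinRatio (c b x : ℝ) : ℝ := arcsin (c * x / √(1 + b * x ^ 2))

lemma arcsinRatio_neg (c b x : ℝ) : arcsinRatio c b (-x) = -arcsinRatio c b x := by
  simp [arcsinRatio, neg_div, arcsin_neg]

lemma arcsinRatio_eq_pi_div_two {c b x : ℝ} (hpos : 0 < c * x)
    (hsq : (c * x) ^ 2 = 1 + b * x ^ 2) :
    arcsinRatio c b x = π / 2 := by
  rw [arcsinRatio, ← hsq, sqrt_sq hpos.le, div_self hpos.ne', arcsin_one]

lemma continuousOn_arcsinRatio (c b : ℝ) :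
    ContinuousOn (arcsinRatio c b) {x | 0 < 1 + b * x ^ 2} :=
  continuous_arcsin.comp_continuousOn <| by
    fun_prop (disch := exact fun x hx => (sqrt_pos.2 hx).ne')

lemma hasDerivAt_arcsinRatio {c b x : ℝ} (hx : 0 < 1 + (b - c ^ 2) * x ^ 2) :
    HasDerivAt (arcsinRatio c b) (c / ((1 + b * x ^ 2) * √(1 + (b - c ^ 2) * x ^ 2))) x := by
  have hq : 0 < 1 + b * x ^ 2 := by nlinarith [sq_nonneg (c * x)]
  set s := √(1 + b * x ^ 2) with hs_def
  have hs : 0 < s := sqrt_pos.2 hq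
  have hs_sq : s ^ 2 = 1 + b * x ^ 2 := sq_sqrt hq.le
  have hu : HasDerivAt (fun y => c * y / √(1 + b * y ^ 2)) (c / s ^ 3) x := by
    have hsqrt := ((hasDerivAt_pow 2 x).const_mul b).const_add 1 |>.sqrt hq.ne'
    refine (((hasDerivAt_id' x).const_mul c).div hsqrt hs.ne').congr_deriv ?_
    rw [← hs_def]
    field_simp
    linear_combination (2 * c) * hs_sq
  have hu_sq : (c * x / s) ^ 2 < 1 := by
    rw [div_pow, hs_sq, div_lt_one hq]; nlinarith
  have hroot : √(1 - (c * x / s) ^ 2) = √(1 + (b - c ^ 2) * x ^ 2) / s := by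
    have : 1 - (c * x / s) ^ 2 = (1 + (b - c ^ 2) * x ^ 2) / s ^ 2 := by
      rw [div_pow, hs_sq, one_sub_div hq.ne']; ring
    rw [this, sqrt_div' _ (sq_nonneg s), sqrt_sq hs.le]
  have := (hasDerivAt_arcsin (by nlinarith [hu_sq]) (by nlinarith [hu_sq])).comp x hu
  refine this.congr_deriv ?_
  rw [hroot]
  field_simp
  linear_combination (-c) * hs_sq

theorem Function.Odd.intervalIntegral_eq_zero {E : Type*} [NormedAddCommGroup E]
    [NormedSpace ℝ E] {f : ℝ → E} (hf : f.Odd) (a : ℝ) : ∫ x in -a..a, f x = 0 := by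
  have h := integral_comp_neg (a := -a) (b := a) f
  simp only [hf.eq, intervalIntegral.integral_neg, neg_neg] at h
  have h2 : (2 : ℝ) • ∫ x in -a..a, f x = 0 := by
    rw [two_smul]
    nth_rewrite 1 [← h]
    exact neg_add_cancel _
  exact (smul_eq_zero.1 h2).resolve_left two_ne_zero

lemma one_div_sqrt_two_sq : (1 / √2) ^ 2 = 1 / 2 := by simp

lemma two_mul_sq_lt_one_of_mem_Ioo {x : ℝ} (hx : x ∈ Ioo (-(1 / √2)) (1 / √2)) :
    2 * x ^ 2 < 1 := by
  nlinarith [sq_lt_sq' hx.1 hx.2, one_div_sqrt_two_sq]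

lemma two_mul_sq_le_one_of_mem_Icc {x : ℝ} (hx : x ∈ Icc (-(1 / √2)) (1 / √2)) :
    2 * x ^ 2 ≤ 1 := by
  nlinarith [sq_le_sq' hx.1 hx.2, one_div_sqrt_two_sq]

lemma Icc_subset_setOf_one_add_mul_sq_pos {b : ℝ} (hb : -2 < b) :
    Icc (-(1 / √2)) (1 / √2) ⊆ {x | 0 < 1 + b * x ^ 2} := fun x hx => by
  have := two_mul_sq_le_one_of_mem_Icc hx
  show 0 < 1 + b * x ^ 2
  rcases le_total 0 b with hb0 | hb0 <;> nlinarith [sq_nonneg x]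

lemma konnoDensity_even : konnoDensity.Even := fun x => by simp [konnoDensity]

lemma konnoDensity_nonneg {x : ℝ} (hx : x ^ 2 < 1) : 0 ≤ konnoDensity x :=
  one_div_nonneg.2 <| mul_nonneg (mul_nonneg pi_pos.le (by linarith)) (sqrt_nonneg _)

lemma hasDerivAt_arcsinRatio_one_neg_one_div_pi {x : ℝ} (hx : 2 * x ^ 2 < 1) :
    HasDerivAt (fun y => arcsinRatio 1 (-1) y / π) (konnoDensity x) x := by
  refine ((hasDerivAt_arcsinRatio (by linarith)).div_const π).congr_deriv ?_
  rw [konnoDensity, div_div]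
  ring_nf

lemma intervalIntegrable_konnoDensity :
    IntervalIntegrable konnoDensity volume (-(1 / √2)) (1 / √2) := by
  have hle : -(1 / √2) ≤ 1 / √2 := neg_le_self (by positivity)
  refine intervalIntegrable_deriv_of_nonneg (g := fun y => arcsinRatio 1 (-1) y / π) ?_ ?_ ?_
  · rw [uIcc_of_le hle]
    exact ((continuousOn_arcsinRatio 1 (-1)).mono
      (Icc_subset_setOf_one_add_mul_sq_pos (by norm_num))).div_const π
  all_goals rw [min_eq_left hle, max_eq_right hle]; intro x hx
  · exact hasDerivAt_arcsinRatio_one_neg_one_div_pi (two_mul_sq_lt_one_of_mem_Ioo hx)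
  · exact konnoDensity_nonneg (by linarith [two_mul_sq_lt_one_of_mem_Ioo hx, sq_nonneg x])

lemma wojcikWeightQuarter_eq (x : ℝ) :
    wojcikWeightQuarter x =
      2 * (x ^ 2 + 1) / (x ^ 2 + 4) + x * (x ^ 2 + 3 * |x| - 2) / (x ^ 2 + 4) := by
  unfold wojcikWeightQuarter
  split_ifs with hx
  · rw [abs_of_nonneg hx]; ring
  · rw [abs_of_neg (not_le.1 hx)]; ring

noncomputable def wojcikEvenPrimitive (x : ℝ) : ℝ :=
  (4 * arcsinRatio 1 (-1) x - arcsinRatio (3 / 2) (1 / 4) x) / (5 * π)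

lemma hasDerivAt_wojcikEvenPrimitive {x : ℝ} (hx : 2 * x ^ 2 < 1) :
    HasDerivAt wojcikEvenPrimitive (2 * (x ^ 2 + 1) / (x ^ 2 + 4) * konnoDensity x) x := by
  have h₁ := hasDerivAt_arcsinRatio (c := 1) (b := -1) (x := x) (by linarith)
  have h₂ := hasDerivAt_arcsinRatio (c := 3 / 2) (b := 1 / 4) (x := x) (by linarith)
  refine (((h₁.const_mul 4).sub h₂).div_const (5 * π)).congr_deriv ?_
  rw [show 1 + (-1 - 1 ^ 2) * x ^ 2 = 1 - 2 * x ^ 2 by ring,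
    show 1 + (1 / 4 - (3 / 2) ^ 2) * x ^ 2 = 1 - 2 * x ^ 2 by ring,
    show 1 + -1 * x ^ 2 = 1 - x ^ 2 by ring, konnoDensity]
  have : 0 < √(1 - 2 * x ^ 2) := sqrt_pos.2 (by linarith)
  have : 1 - x ^ 2 ≠ 0 := by nlinarith
  field_simp
  ring

lemma wojcikEvenPrimitive_neg (x : ℝ) : wojcikEvenPrimitive (-x) = -wojcikEvenPrimitive x := by
  simp only [wojcikEvenPrimitive, arcsinRatio_neg]
  ring

lemma wojcikEvenPrimitive_one_div_sqrt_two : wojcikEvenPrimitive (1 / √2) = 3 / 10 := by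
  have h := one_div_sqrt_two_sq
  rw [wojcikEvenPrimitive, arcsinRatio_eq_pi_div_two (by positivity) (by linear_combination 2 * h),
    arcsinRatio_eq_pi_div_two (by positivity) (by linear_combination 2 * h)]
  field_simp
  ring

lemma integral_wojcikEven_mul_konnoDensity :
    ∫ x in -(1 / √2)..1 / √2, 2 * (x ^ 2 + 1) / (x ^ 2 + 4) * konnoDensity x = 3 / 5 := by
  have hle : -(1 / √2) ≤ 1 / √2 := neg_le_self (by positivity)
  have hcont : ContinuousOn wojcikEvenPrimitive (Icc (-(1 / √2)) (1 / √2)) := by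
    have h₁ := (continuousOn_arcsinRatio 1 (-1)).mono
      (Icc_subset_setOf_one_add_mul_sq_pos (b := -1) (by norm_num))
    have h₂ := (continuousOn_arcsinRatio (3 / 2) (1 / 4)).mono
      (Icc_subset_setOf_one_add_mul_sq_pos (b := 1 / 4) (by norm_num))
    unfold wojcikEvenPrimitive
    fun_prop
  have hint : IntervalIntegrable (fun x => 2 * (x ^ 2 + 1) / (x ^ 2 + 4) * konnoDensity x)
      volume (-(1 / √2)) (1 / √2) :=
    intervalIntegrable_konnoDensity.continuousOn_mul <| Continuous.continuousOn <|
      by fun_prop (disch := intro x; positivity)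
  rw [integral_eq_sub_of_hasDerivAt_of_le hle hcont
    (fun x hx => hasDerivAt_wojcikEvenPrimitive (two_mul_sq_lt_one_of_mem_Ioo hx)) hint,
    wojcikEvenPrimitive_neg, wojcikEvenPrimitive_one_div_sqrt_two]
  norm_num

theorem wojcik_quarter_weight_integral :
    ∫ x in (-(1 / Real.sqrt 2))..(1 / Real.sqrt 2),
      wojcikWeightQuarter x * (1 / (π * (1 - x^2) * Real.sqrt (1 - 2 * x^2))) = 3 / 5 := by
  set oddPart : ℝ → ℝ := fun x => x * (x ^ 2 + 3 * |x| - 2) / (x ^ 2 + 4)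
  have hodd : oddPart.Odd := fun x => by simp only [oddPart, abs_neg]; ring
  have hint : ∀ g : ℝ → ℝ, Continuous g →
      IntervalIntegrable (fun x => g x * konnoDensity x) volume (-(1 / √2)) (1 / √2) :=
    fun g hg => intervalIntegrable_konnoDensity.continuousOn_mul hg.continuousOn
  calc ∫ x in -(1 / √2)..1 / √2, wojcikWeightQuarter x * konnoDensity x
      = ∫ x in -(1 / √2)..1 / √2,
          (2 * (x ^ 2 + 1) / (x ^ 2 + 4) * konnoDensity x + oddPart x * konnoDensity x) := by
        simp only [wojcikWeightQuarter_eq, add_mul, oddPart]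
    _ = 3 / 5 + 0 := by
        rw [integral_add (hint _ (by fun_prop (disch := intro x; positivity)))
          (hint _ (by fun_prop (disch := intro x; positivity)))]
        congr 1
        exacts [integral_wojcikEven_mul_konnoDensity,
          (hodd.mul_even konnoDensity_even).intervalIntegral_eq_zero _]
    _ = 3 / 5 := add_zero _
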